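/- With the quasi-orthogonal residual representation T_m (tridiagonal with modified last diagonal entry), for every polynomial p of degree at most 2m−2, ⟨u, p(A)u⟩ = β_0² ⟨e_1, p(T_m) e_1⟩. -/

import Mathlib

/-! Since `T` is upper Hessenberg, `T ^ k e₁` has no component along `e_m` for `k < m - 1`, so the
residual term of `A V = V T + v̂ e_mᴴ` is invisible and `A ^ k u = β₀ V T ^ k e₁` for `k ≤ m - 1`.
A power `k ≤ 2m - 2` splits as `i + j` with `i, j ≤ m - 1`; moving `A ^ i` and `T ^ i` across
the inner products (both are Hermitian) and using `Vᴴ V = 1` matches the moments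
`⟨u, A ^ k u⟩ = β₀² ⟨e₁, T ^ k e₁⟩`, which then extends linearly to polynomials. -/

open Matrix Polynomial

namespace Matrix

variable {R : Type*}

def IsUpperHessenberg [Zero R] {m : ℕ} (T : Matrix (Fin m) (Fin m) R) : Prop :=
  ∀ i j : Fin m, (j : ℕ) + 1 < i → T i j = 0

theorem IsUpperHessenberg.pow_apply_eq_zero [Semiring R] {m : ℕ} {T : Matrix (Fin m) (Fin m) R}
    (hT : T.IsUpperHessenberg) (k : ℕ) {i j : Fin m} (hij : (j : ℕ) + k < i) :
    (T ^ k) i j = 0 := by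
  induction k generalizing i with
  | zero => exact one_apply_ne (Fin.ne_of_val_ne (by omega))
  | succ k ih =>
    rw [pow_succ', mul_apply]
    refine Finset.sum_eq_zero fun l _ => ?_
    by_cases hl : (l : ℕ) + 1 < i
    · rw [hT i l hl, zero_mul]
    · rw [ih (by omega), mul_zero]

theorem pow_mulVec_mulVec_of_mul_eq_mul_add [Semiring R] {ι κ : Type*} [Fintype ι]
    [DecidableEq ι] [Fintype κ] [DecidableEq κ] {A : Matrix ι ι R} {V E : Matrix ι κ R} {T : Matrix κ κ R} (hAV : A * V = V * T + E)
    {x : κ → R} {K : ℕ} (hE : ∀ k < K, E *ᵥ (T ^ k *ᵥ x) = 0) :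
    ∀ k ≤ K, A ^ k *ᵥ (V *ᵥ x) = V *ᵥ (T ^ k *ᵥ x) := by
  intro k hk
  induction k with
  | zero => simp
  | succ k ih =>
    calc A ^ (k + 1) *ᵥ (V *ᵥ x) = (A * V) *ᵥ (T ^ k *ᵥ x) := by
          rw [pow_succ', ← mulVec_mulVec, ih (by omega), mulVec_mulVec]
      _ = V *ᵥ (T ^ (k + 1) *ᵥ x) := by
          rw [hAV, add_mulVec, hE k (by omega), add_zero, pow_succ', mulVec_mulVec, mulVec_mulVec,
            Matrix.mul_assoc]

theorem of_mul_ite_mulVec_eq_zero [NonAssocSemiring R] {ι : Type*} {m : ℕ}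
    (v : ι → R) {y : Fin m → R} (hy : ∀ j : Fin m, (j : ℕ) = m - 1 → y j = 0) :
    (of fun (i : ι) (j : Fin m) => v i * (if (j : ℕ) = m - 1 then 1 else 0)) *ᵥ y = 0 := by
  funext i
  simp only [mulVec, dotProduct, of_apply, Pi.zero_apply]
  refine Finset.sum_eq_zero fun j _ => ?_
  by_cases hj : (j : ℕ) = m - 1
  · simp [hy j hj]
  · simp [hj]

theorem star_mulVec_dotProduct_mulVec_of_conjTranspose_mul_self [Semiring R] [StarRing R]
    {ι κ : Type*} [Fintype ι] [Fintype κ] [DecidableEq κ] {V : Matrix ι κ R} (hV : Vᴴ * V = 1)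
    (a b : κ → R) : star (V *ᵥ a) ⬝ᵥ (V *ᵥ b) = star a ⬝ᵥ b := by
  rw [star_mulVec, dotProduct_mulVec, vecMul_vecMul, hV, vecMul_one]

theorem IsHermitian.star_dotProduct_pow_add_mulVec [Semiring R] [StarRing R] {ι : Type*}
    [Fintype ι] [DecidableEq ι] {A : Matrix ι ι R} (hA : A.IsHermitian) (i j : ℕ) (x : ι → R) :
    star x ⬝ᵥ (A ^ (i + j) *ᵥ x) = star (A ^ i *ᵥ x) ⬝ᵥ (A ^ j *ᵥ x) := by
  rw [star_mulVec, (hA.pow i).eq, ← dotProduct_mulVec, mulVec_mulVec, ← pow_add]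

theorem dotProduct_aeval_mulVec_eq_of_pow [CommSemiring R] {ι κ : Type*} [Fintype ι]
    [DecidableEq ι] [Fintype κ] [DecidableEq κ] {A : Matrix ι ι R} {B : Matrix κ κ R}
    {x x' : ι → R} {y y' : κ → R} {c : R} {N : ℕ}
    (h : ∀ k ≤ N, x ⬝ᵥ (A ^ k *ᵥ x') = c * (y ⬝ᵥ (B ^ k *ᵥ y'))) (p : R[X])
    (hp : p.natDegree ≤ N) : x ⬝ᵥ (aeval A p *ᵥ x') = c * (y ⬝ᵥ (aeval B p *ᵥ y')) := by
  refine induction_with_natDegree_le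
    (fun p => x ⬝ᵥ (aeval A p *ᵥ x') = c * (y ⬝ᵥ (aeval B p *ᵥ y'))) N ?_ (fun k r _ hk => ?_) (fun f g _ _ hf hg => ?_) p hp
  · simp
  · simp only [C_mul', map_smul, map_pow, aeval_X, smul_mulVec, dotProduct_smul, h k hk,
      smul_eq_mul]
    ring
  · simp only [map_add, add_mulVec, dotProduct_add, hf, hg, mul_add]

end Matrix

/-- With the quasi-orthogonal residual representation `T`
(Hermitian tridiagonal, `A V = V T + v̂ e_m*`, `V` orthonormal, `u = β₀ V e₁`),
for every polynomial `p` of degree at most `2m−2`,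
`⟨u, p(A) u⟩ = β₀² ⟨e₁, p(T) e₁⟩`. -/
theorem stmt_14 {n m : ℕ} (hm : 0 < m)
    (A : Matrix (Fin n) (Fin n) ℂ) (hA : A.IsHermitian)
    (u : Fin n → ℂ)
    (V : Matrix (Fin n) (Fin m) ℂ) (hV : Vᴴ * V = 1)
    (T : Matrix (Fin m) (Fin m) ℂ) (hT : T.IsHermitian)
    (htri : ∀ i j : Fin m, ((i : ℕ) + 1 < (j : ℕ) ∨ (j : ℕ) + 1 < (i : ℕ)) → T i j = 0)
    (vhat : Fin n → ℂ)
    (hdecomp : A * V = V * T +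
      Matrix.of fun (i : Fin n) (j : Fin m) => vhat i * (if (j : ℕ) = m - 1 then 1 else 0))
    (β₀ : ℝ)
    (hu : u = (β₀ : ℂ) • (V *ᵥ (Pi.single (⟨0, hm⟩ : Fin m) 1 : Fin m → ℂ))) :
    ∀ p : Polynomial ℂ, p.natDegree ≤ 2 * m - 2 →
      star u ⬝ᵥ ((Polynomial.aeval A p) *ᵥ u)
        = (β₀ : ℂ) ^ 2 *
          (star (Pi.single (⟨0, hm⟩ : Fin m) (1 : ℂ)) ⬝ᵥ
            ((Polynomial.aeval T p) *ᵥ (Pi.single (⟨0, hm⟩ : Fin m) 1 : Fin m → ℂ))) := by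
  set e₁ : Fin m → ℂ := Pi.single ⟨0, hm⟩ 1
  have hHess : T.IsUpperHessenberg := fun i j h => htri i j (Or.inr h)
  have hkrylov : ∀ k ≤ m - 1, A ^ k *ᵥ u = (β₀ : ℂ) • (V *ᵥ (T ^ k *ᵥ e₁)) := by
    intro k hk
    rw [hu, mulVec_smul, pow_mulVec_mulVec_of_mul_eq_mul_add hdecomp (fun k hk => ?_) k hk]
    refine of_mul_ite_mulVec_eq_zero vhat fun j hj => ?_
    rw [mulVec_single_one]
    exact hHess.pow_apply_eq_zero k (by simp; omega)
  refine dotProduct_aeval_mulVec_eq_of_pow (fun k hk => ?_)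
  obtain ⟨i, j, hi, hj, rfl⟩ : ∃ i j, i ≤ m - 1 ∧ j ≤ m - 1 ∧ i + j = k :=
    ⟨min k (m - 1), k - min k (m - 1), by omega, by omega, by omega⟩
  rw [hA.star_dotProduct_pow_add_mulVec, hT.star_dotProduct_pow_add_mulVec, hkrylov i hi,
    hkrylov j hj, star_smul, smul_dotProduct, dotProduct_smul,
    star_mulVec_dotProduct_mulVec_of_conjTranspose_mul_self hV]
  simp only [smul_eq_mul, Complex.star_def, Complex.conj_ofReal]
  ring
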